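/- Set unification rule for nonempty sets: insert a A = insert b B if and only if (a = b ∧ A = B) ∨ (a = b ∧ insert a A = B) ∨ (a = b ∧ A = insert b B) ∨ (∃ N, A = insert b N ∧ B = insert a N). -/

import Mathlib

/-! If `a ≠ b`, both `b ∈ A` and `a ∈ B`, and `N := A ∩ B` is the common remainder:
`A = insert b N` and `B = insert a N`. If `a = b`, either `a` lies in one of `A`, `B`, which then
equals `insert a` of the other, or it lies in neither, and removing it from both sides gives
`A = B`. -/

namespace Set

variable {α : Type*} {a b : α} {A B : Set α}

lemma mem_of_insert_eq_insert_of_ne (h : insert a A = insert b B) (hab : a ≠ b) : b ∈ A :=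
  (h ▸ mem_insert b B : b ∈ insert a A).resolve_left hab.symm

lemma eq_insert_inter_of_insert_eq_insert (h : insert a A = insert b B) (hb : b ∈ A) :
    A = insert b (A ∩ B) := by
  refine (insert_subset hb inter_subset_left).antisymm' fun x hx => ?_
  obtain rfl | hxB := (h ▸ mem_insert_of_mem a hx : x ∈ insert b B)
  · exact mem_insert x _
  · exact mem_insert_of_mem b ⟨hx, hxB⟩

theorem insert_eq_insert_iff_of_ne (hab : a ≠ b) :
    insert a A = insert b B ↔ ∃ N, A = insert b N ∧ B = insert a N := by
  refine ⟨fun h => ⟨A ∩ B, ?_, ?_⟩, ?_⟩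
  · exact eq_insert_inter_of_insert_eq_insert h (mem_of_insert_eq_insert_of_ne h hab)
  · rw [inter_comm]
    exact eq_insert_inter_of_insert_eq_insert h.symm
      (mem_of_insert_eq_insert_of_ne h.symm hab.symm)
  · rintro ⟨N, rfl, rfl⟩
    exact insert_comm a b N

theorem insert_eq_insert_iff_same :
    insert a A = insert a B ↔ A = B ∨ insert a A = B ∨ A = insert a B := by
  refine ⟨fun h => ?_, ?_⟩
  · by_cases hB : a ∈ B
    · exact Or.inr (Or.inl (by rw [h, insert_eq_of_mem hB]))
    by_cases hA : a ∈ A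
    · exact Or.inr (Or.inr (by rw [← h, insert_eq_of_mem hA]))
    exact Or.inl (by rw [← insert_sdiff_self_of_notMem hA, h, insert_sdiff_self_of_notMem hB])
  · rintro (rfl | rfl | rfl) <;> simp only [insert_idem]

end Set

theorem stmt9 {α : Type*} (a b : α) (A B : Set α) :
    insert a A = insert b B ↔
      (a = b ∧ A = B) ∨ (a = b ∧ insert a A = B) ∨ (a = b ∧ A = insert b B) ∨
      (∃ N : Set α, A = insert b N ∧ B = insert a N) := by
  refine ⟨fun h => ?_, ?_⟩
  · by_cases hab : a = b
    · subst hab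
      rcases Set.insert_eq_insert_iff_same.1 h with h' | h' | h'
      exacts [Or.inl ⟨rfl, h'⟩, Or.inr (Or.inl ⟨rfl, h'⟩),
        Or.inr (Or.inr (Or.inl ⟨rfl, h'⟩))]
    · exact Or.inr (Or.inr (Or.inr ((Set.insert_eq_insert_iff_of_ne hab).1 h)))
  · rintro (⟨rfl, h⟩ | ⟨rfl, h⟩ | ⟨rfl, h⟩ | ⟨N, rfl, rfl⟩)
    iterate 3 exact Set.insert_eq_insert_iff_same.2 (by tauto)
    exact Set.insert_comm a b N
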